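/- If all entries of the row-stochastic matrix T are at least ε with 0 < ε ≤ 1/K and K ≥ 2, then the DeGroot iterates converge to a common limit: the spread satisfies s_t ≤ (1 − 2ε)^t s_0, hence s_t → 0 as t → ∞, i.e., a consensus is reached. -/
import Mathlib

open Filter

theorem degroot_consensus_convergence (K : ℕ) (hK : 2 ≤ K)
    (T : Fin K → Fin K → ℝ) (ε : ℝ) (hε : 0 < ε) (hεK : ε ≤ 1 / (K : ℝ))
    (hge : ∀ i j, ε ≤ T i j)
    (hrow : ∀ i, ∑ j, T i j = 1)
    (p : ℕ → Fin K → ℝ)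
    (hstep : ∀ t i, p (t + 1) i = ∑ j, T i j * p t j)
    (s : ℕ → ℝ)
    (hs : ∀ t, s t =
      (Finset.univ.sup'
        (Finset.univ_nonempty_iff.mpr (Fin.pos_iff_nonempty.mp (by omega))) (p t))
      - (Finset.univ.inf'
        (Finset.univ_nonempty_iff.mpr (Fin.pos_iff_nonempty.mp (by omega))) (p t))) :
    (∀ t, s t ≤ (1 - 2 * ε) ^ t * s 0) ∧ Tendsto s atTop (nhds 0) := by
  have hK0 : 0 < K := by omega
  have ne : (Finset.univ : Finset (Fin K)).Nonempty :=
    Finset.univ_nonempty_iff.mpr (Fin.pos_iff_nonempty.mp hK0)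
  set M : ℕ → ℝ := fun t => Finset.univ.sup' ne (p t) with hM
  set m : ℕ → ℝ := fun t => Finset.univ.inf' ne (p t) with hm
  have hsMm : ∀ t, s t = M t - m t := fun t => hs t
  have hKR : (2:ℝ) ≤ (K:ℝ) := by exact_mod_cast hK
  have hKpos : (0:ℝ) < (K:ℝ) := by positivity
  have hεK1 : ε * K ≤ 1 := (le_div_iff₀ hKpos).mp hεK
  have h2ε : 2 * ε ≤ 1 := by nlinarith
  have hr0 : 0 ≤ 1 - 2 * ε := by linarith
  have hr1 : 1 - 2 * ε < 1 := by linarith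
  have hsnn : ∀ t, 0 ≤ s t := by
    intro t
    rw [hsMm t]
    have := Finset.inf'_le (f := p t) (Finset.mem_univ (⟨0, hK0⟩ : Fin K))
    have := Finset.le_sup' (f := p t) (Finset.mem_univ (⟨0, hK0⟩ : Fin K))
    simp only [hM, hm]
    linarith
  have key : ∀ t, s (t + 1) ≤ (1 - 2 * ε) * s t := by
    intro t
    obtain ⟨j0, _, hj0⟩ := Finset.exists_mem_eq_inf' ne (p t)
    obtain ⟨j1, _, hj1⟩ := Finset.exists_mem_eq_sup' ne (p t)
    have hmle : ∀ j, m t ≤ p t j := fun j => Finset.inf'_le _ (Finset.mem_univ j)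
    have hleM : ∀ j, p t j ≤ M t := fun j => Finset.le_sup' _ (Finset.mem_univ j)
    have hd : 0 ≤ M t - m t := by linarith [hmle j1, hleM j1]
    have hsum : ∀ i, ∑ j, T i j * p t j = (∑ j, T i j * (p t j - m t)) + m t := by
      intro i
      have : ∑ j, T i j * (p t j - m t)
          = (∑ j, T i j * p t j) - (∑ j, T i j) * m t := by
        rw [Finset.sum_mul, ← Finset.sum_sub_distrib]
        congr 1; ext j; ring
      rw [this, hrow]; ring
    have hub : ∀ i, p (t + 1) i ≤ M t - ε * (M t - m t) := by
      intro i
      rw [hstep, hsum]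
      have hsplit : ∑ j, T i j * (p t j - m t)
          = T i j0 * (p t j0 - m t) + ∑ j ∈ Finset.univ.erase j0, T i j * (p t j - m t) := by
        exact (Finset.add_sum_erase _ _ (Finset.mem_univ j0)).symm
      have hz : T i j0 * (p t j0 - m t) = 0 := by rw [← hj0]; ring
      have hrest : ∑ j ∈ Finset.univ.erase j0, T i j * (p t j - m t)
          ≤ ∑ j ∈ Finset.univ.erase j0, T i j * (M t - m t) := by
        apply Finset.sum_le_sum
        intro j _
        have h1 : 0 ≤ T i j := le_trans hε.le (hge i j)
        have := hleM j
        nlinarith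
      have hrs : ∑ j ∈ Finset.univ.erase j0, T i j * (M t - m t)
          = (1 - T i j0) * (M t - m t) := by
        rw [← Finset.sum_mul]
        congr 1
        have := Finset.add_sum_erase Finset.univ (fun j => T i j) (Finset.mem_univ j0)
        have h2 := hrow i
        linarith
      have hT0 : ε ≤ T i j0 := hge i j0
      have : (1 - T i j0) * (M t - m t) ≤ (1 - ε) * (M t - m t) := by nlinarith
      nlinarith [hsplit, hz, hrest, hrs]
    have hlb : ∀ i, m t + ε * (M t - m t) ≤ p (t + 1) i := by
      intro i
      rw [hstep, hsum]
      have hterm : ε * (M t - m t) ≤ T i j1 * (p t j1 - m t) := by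
        have := hge i j1
        rw [← hj1]
        nlinarith
      have hmono : T i j1 * (p t j1 - m t) ≤ ∑ j, T i j * (p t j - m t) := by
        apply Finset.single_le_sum (f := fun j => T i j * (p t j - m t))
          (fun j _ => mul_nonneg (le_trans hε.le (hge i j)) (by linarith [hmle j]))
          (Finset.mem_univ j1)
      linarith
    have hMub : M (t + 1) ≤ M t - ε * (M t - m t) :=
      Finset.sup'_le ne _ (fun i _ => hub i)
    have hmlb : m t + ε * (M t - m t) ≤ m (t + 1) :=
      Finset.le_inf' ne _ (fun i _ => hlb i)
    rw [hsMm, hsMm]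
    nlinarith
  have hbound : ∀ t, s t ≤ (1 - 2 * ε) ^ t * s 0 := by
    intro t
    induction t with
    | zero => simp
    | succ n ih =>
      calc s (n + 1) ≤ (1 - 2 * ε) * s n := key n
        _ ≤ (1 - 2 * ε) * ((1 - 2 * ε) ^ n * s 0) := by
            exact mul_le_mul_of_nonneg_left ih hr0
        _ = (1 - 2 * ε) ^ (n + 1) * s 0 := by ring
  refine ⟨hbound, ?_⟩
  have hlim : Tendsto (fun t => (1 - 2 * ε) ^ t * s 0) atTop (nhds 0) := by
    have := (tendsto_pow_atTop_nhds_zero_of_lt_one hr0 hr1).mul_const (s 0)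
    simpa using this
  exact squeeze_zero hsnn hbound hlim
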